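/- (Theorem 4 of the paper) For odd positive integers w₁, w₂, every n ≥ 0, every m ≥ 1, and parameters x, y: Σ_{k=0}^{n} C(n,k) w₁^k w₂^{n-k} 𝓔_{n-k}^{(m-1)}(w₁y | λ/w₂) Σ_{i=0}^{w₁-1} (-1)^i 𝓔_k^{(m)}(w₂x + (w₂/w₁)i | λ/w₁) = Σ_{k=0}^{n} C(n,k) w₂^k w₁^{n-k} 𝓔_{n-k}^{(m-1)}(w₂y | λ/w₁) Σ_{i=0}^{w₂-1} (-1)^i 𝓔_k^{(m)}(w₁x + (w₁/w₂)i | λ/w₂). -/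

import Mathlib

open Polynomial Finset

noncomputable def dff {R : Type*} [CommRing R] (μ : R) (n : ℕ) : Polynomial R :=
  ∏ i ∈ Finset.range n, (Polynomial.X - Polynomial.C ((i : R) * μ))

/-!
Write `e_λ^a(t) = ∑ₙ (a|λ)ₙ tⁿ/n!` for the degenerate exponential, so that
`e_λ^a e_λ^b = e_λ^(a+b)` (a Vandermonde identity for `(·|λ)ₙ`). The recursion determines
`𝓔^{(r)}` uniquely, since a polynomial `p` with `p(x+1) = -p(x)` vanishes; hence
`(e_λ^w(t) + 1)^r ∑ₖ wᵏ 𝓔_k^{(r)}(x|λ/w) tᵏ/k! = 2^r e_λ^{wx}(t)`.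
For odd `w₁` the alternating sum over `i` contributes the geometric factor
`∑ᵢ (-e_λ^{w₂})ⁱ = (e_λ^{w₁w₂} + 1)/(e_λ^{w₂} + 1)`, so the exponential generating function
of the left-hand side is
`2^{2m-1} e_λ^{w₁w₂(x+y)} (e_λ^{w₁w₂} + 1) / ((e_λ^{w₁} + 1)^m (e_λ^{w₂} + 1)^m)`,
which is symmetric in `w₁` and `w₂`.
-/

section FallingFactorial

variable {R : Type*} [CommRing R]

theorem eval_dff_succ (μ a : R) (n : ℕ) :
    (dff μ (n + 1)).eval a = (dff μ n).eval a * (a - n * μ) := by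
  simp [dff, prod_range_succ]

theorem eval_dff_add (μ a b : R) (n : ℕ) :
    (dff μ n).eval (a + b) =
      ∑ ij ∈ antidiagonal n,
        (n.choose ij.1 : R) * ((dff μ ij.1).eval a * (dff μ ij.2).eval b) := by
  induction n with
  | zero => simp [dff]
  | succ n ih =>
    rw [sum_antidiagonal_choose_succ_mul (fun i j => (dff μ i).eval a * (dff μ j).eval b),
      ← sum_add_distrib, eval_dff_succ, ih, sum_mul]
    refine sum_congr rfl fun ij hij => ?_
    rw [HasAntidiagonal.mem_antidiagonal] at hij
    rw [← Nat.choose_symm_of_eq_add hij.symm, eval_dff_succ, eval_dff_succ, ← hij]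
    push_cast
    ring

theorem map_dff {S : Type*} [CommRing S] (ψ : R →+* S) (μ : R) (n : ℕ) :
    (dff μ n).map ψ = dff (ψ μ) n := by
  simp [dff, Polynomial.map_prod]

end FallingFactorial

section Egf

variable {R : Type*} [CommRing R] [Algebra ℚ R]

open PowerSeries in
noncomputable def egf : (ℕ → R) →ₗ[R] R⟦X⟧ where
  toFun f := mk fun n => (n.factorial : ℚ)⁻¹ • f n
  map_add' f g := by ext; simp
  map_smul' c f := by ext; simp

@[simp]
theorem coeff_egf (f : ℕ → R) (n : ℕ) :
    PowerSeries.coeff n (egf f) = (n.factorial : ℚ)⁻¹ • f n := by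
  simp [egf]

theorem egf_injective : Function.Injective (egf : (ℕ → R) → PowerSeries R) := by
  intro f g h
  funext n
  have hn := congrArg (PowerSeries.coeff n) h
  rw [coeff_egf, coeff_egf] at hn
  exact smul_right_injective R (inv_ne_zero (Nat.cast_ne_zero.mpr n.factorial_ne_zero)) hn

theorem egf_mul (f g : ℕ → R) :
    egf f * egf g =
      egf fun n => ∑ ij ∈ antidiagonal n, (n.choose ij.1 : R) * (f ij.1 * g ij.2) := by
  ext n
  rw [PowerSeries.coeff_mul, coeff_egf, smul_sum]
  refine sum_congr rfl fun ij hij => ?_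
  rw [HasAntidiagonal.mem_antidiagonal] at hij
  subst hij
  rw [coeff_egf, coeff_egf, smul_mul_smul_comm, ← nsmul_eq_mul, ← Nat.cast_smul_eq_nsmul ℚ,
    smul_smul, ← Nat.add_choose_mul_factorial_mul_factorial]
  congr 1
  rw [Nat.choose_symm_add]
  push_cast
  have := ij.1.factorial_ne_zero
  have := ij.2.factorial_ne_zero
  have := (ij.1 + ij.2).choose_pos (Nat.le_add_left ij.2 ij.1)
  field_simp

theorem egf_const_mul (c : R) (f : ℕ → R) :
    egf (fun n => c * f n) = PowerSeries.C c * egf f := by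
  ext n
  simp

theorem map_egf {S : Type*} [CommRing S] [Algebra ℚ S] (ψ : R →+* S) (f : ℕ → R) :
    PowerSeries.map ψ (egf f) = egf fun n => ψ (f n) := by
  ext n
  simp [map_rat_smul]

theorem rescale_egf (c : R) (f : ℕ → R) :
    PowerSeries.rescale c (egf f) = egf fun n => c ^ n * f n := by
  ext n
  simp

end Egf

section DegenerateExponential

variable {R : Type*} [CommRing R] [Algebra ℚ R]

/-- The degenerate exponential `e_μ^a(t)`, formally `(1 + μt) ^ (a / μ)`. -/
noncomputable def degExp (μ a : R) : PowerSeries R :=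
  egf fun n => (dff μ n).eval a

theorem degExp_add (μ a b : R) : degExp μ (a + b) = degExp μ a * degExp μ b := by
  simp only [degExp, egf_mul, eval_dff_add]

theorem degExp_zero (μ : R) : degExp μ 0 = 1 := by
  ext (_ | n)
  · simp [degExp, dff]
  · simp [degExp, dff, prod_range_succ', PowerSeries.coeff_one]

theorem degExp_natCast_mul (μ a : R) (n : ℕ) : degExp μ (n * a) = degExp μ a ^ n := by
  induction n with
  | zero => simp [degExp_zero]
  | succ n ih => rw [Nat.cast_succ, add_one_mul, degExp_add, ih, pow_succ]

theorem constantCoeff_degExp (μ a : R) : PowerSeries.constantCoeff (degExp μ a) = 1 := by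
  simp [← PowerSeries.coeff_zero_eq_constantCoeff_apply, degExp, dff]

theorem isUnit_degExp_add_one (μ a : R) : IsUnit (degExp μ a + 1) := by
  rw [PowerSeries.isUnit_iff_constantCoeff, map_add, constantCoeff_degExp, map_one,
    one_add_one_eq_two]
  simpa only [map_ofNat] using (IsUnit.mk0 (2 : ℚ) two_ne_zero).map (algebraMap ℚ R)

theorem map_degExp {S : Type*} [CommRing S] [Algebra ℚ S] (ψ : R →+* S) (μ a : R) :
    PowerSeries.map ψ (degExp μ a) = degExp (ψ μ) (ψ a) := by
  simp only [degExp, map_egf, ← map_dff, eval_map, eval₂_at_apply]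

theorem rescale_degExp (c μ a : R) :
    PowerSeries.rescale c (degExp μ a) = degExp (c * μ) (c * a) := by
  simp only [degExp, rescale_egf, dff, eval_prod, eval_sub, eval_X, eval_C]
  congr! 2 with n
  rw [show c ^ n = ∏ _i ∈ range n, c by simp, ← prod_mul_distrib]
  exact prod_congr rfl fun i _ => by ring

end DegenerateExponential

theorem Odd.add_one_mul_geom_sum_neg {R : Type*} [CommRing R] {n : ℕ} (hn : Odd n) (x : R) :
    (x + 1) * ∑ i ∈ range n, (-x) ^ i = x ^ n + 1 := by
  have h := mul_neg_geom_sum (-x) n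
  rw [hn.neg_pow] at h
  linear_combination h

theorem Polynomial.eq_zero_of_comp_X_add_one_eq_neg {R : Type*} [CommRing R] [NoZeroDivisors R]
    [CharZero R] {p : R[X]} (h : p.comp (X + 1) = -p) : p = 0 := by
  rw [← C_1] at h
  have hlc := leadingCoeff_comp (p := p) (q := X + C 1)
    (by rw [natDegree_X_add_C]; exact one_ne_zero)
  rw [h, leadingCoeff_neg, leadingCoeff_X_add_C, one_pow, mul_one, neg_eq_iff_add_eq_zero,
    ← two_mul, mul_eq_zero] at hlc
  exact leadingCoeff_eq_zero.mp (hlc.resolve_left two_ne_zero)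

theorem PowerSeries.eq_zero_of_map_comp_X_add_one_eq_neg {R : Type*} [CommRing R]
    [NoZeroDivisors R] [CharZero R] {H : PowerSeries R[X]}
    (h : map (compRingHom (Polynomial.X + 1)) H = -H) : H = 0 :=
  ext fun n => Polynomial.eq_zero_of_comp_X_add_one_eq_neg (by simpa using congrArg (coeff n) h)

theorem map_compRingHom_degExp {R : Type*} [CommRing R] [Algebra ℚ R] (q : R[X]) (μ : R)
    (a : R[X]) : PowerSeries.map (compRingHom q) (degExp (C μ) a) = degExp (C μ) (a.comp q) := by
  simp [map_degExp]

section EulerGeneratingFunction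

variable {K : Type*} [Field K] [CharZero K] (e : ℕ → ℕ → K[X]) (μ : K)

theorem egf_higherOrderEuler (he0 : ∀ n, e 0 n = dff μ n)
    (hrec : ∀ r n, (e (r + 1) n).comp (X + 1) + e (r + 1) n = 2 * e r n) (r : ℕ) :
    (degExp (C μ) 1 + 1) ^ r * egf (e r) = 2 ^ r * degExp (C μ) X := by
  induction r with
  | zero =>
    simp only [pow_zero, one_mul, degExp, ← map_dff, eval_map, eval₂_C_X]
    exact congrArg egf (funext he0)
  | succ r ih =>
    set V := degExp (C μ) 1 + 1
    set σ := PowerSeries.map (compRingHom (X + 1 : K[X]))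
    have hV : σ V = V := by simp [σ, V, map_compRingHom_degExp]
    have hexp : σ (degExp (C μ) X) = degExp (C μ) X * (V - 1) := by
      simp [σ, V, map_compRingHom_degExp, degExp_add]
    have hegf : σ (egf (e (r + 1))) = 2 * egf (e r) - egf (e (r + 1)) := by
      rw [map_egf, eq_sub_iff_add_eq, ← map_add, two_mul, ← map_add]
      congr 1
      funext n
      simp only [Pi.add_apply, coe_compRingHom_apply, hrec, two_mul]
    rw [← sub_eq_zero]
    refine PowerSeries.eq_zero_of_map_comp_X_add_one_eq_neg ?_
    rw [map_sub, map_mul, map_mul, map_pow, map_pow, hV, hexp, hegf, map_ofNat]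
    linear_combination 2 * V * ih

theorem egf_higherOrderEuler_aeval {S : Type*} [CommRing S] [Algebra K S] [Algebra ℚ S]
    (he0 : ∀ n, e 0 n = dff μ n)
    (hrec : ∀ r n, (e (r + 1) n).comp (X + 1) + e (r + 1) n = 2 * e r n)
    (c : K) (z : S) (r : ℕ) :
    (degExp (algebraMap K S (c * μ)) (algebraMap K S c) + 1) ^ r *
        egf (fun k => algebraMap K S (c ^ k) * aeval z (e r k)) =
      2 ^ r * degExp (algebraMap K S (c * μ)) (algebraMap K S c * z) := by
  have h := congrArg (fun F => PowerSeries.rescale (algebraMap K S c)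
    (PowerSeries.map (aeval z).toRingHom F)) (egf_higherOrderEuler e μ he0 hrec r)
  simpa [map_degExp, rescale_degExp, map_egf, rescale_egf, map_ofNat] using h

end EulerGeneratingFunction

section SymmetricIdentity

variable {K : Type*} [Field K] [CharZero K] (E : K → ℕ → ℕ → K[X]) (ℓ : K)

noncomputable def eulerSymmSum (u v m n : ℕ) : K[X][X] :=
  ∑ k ∈ range (n + 1),
    C (C ((n.choose k : K) * (u : K) ^ k * (v : K) ^ (n - k))) *
      aeval (C (C (u : K) * X) : K[X][X]) (E (ℓ / v) (m - 1) (n - k)) *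
      ∑ i ∈ range u,
        C (C ((-1 : K) ^ i)) *
          aeval (C (C (v : K)) * (X : K[X][X]) + C (C ((v : K) / (u : K) * (i : K))))
            (E (ℓ / u) m k)

theorem egf_alternatingEulerSum (hE0 : ∀ μ n, E μ 0 n = dff μ n)
    (hErec : ∀ μ r n, (E μ (r + 1) n).comp (X + 1) + E μ (r + 1) n = 2 * E μ r n)
    {u : ℕ} (hu : (u : K) ≠ 0) (v r : ℕ) :
    (degExp (C (C ℓ)) (C (C (u : K))) + 1) ^ r *
        egf (fun k => C (C ((u : K) ^ k)) * ∑ i ∈ range u, C (C ((-1 : K) ^ i)) *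
          aeval (C (C (v : K)) * (X : K[X][X]) + C (C ((v : K) / (u : K) * (i : K))))
            (E (ℓ / u) r k)) =
      2 ^ r * degExp (C (C ℓ)) (C (C ((u : K) * v)) * X) *
        ∑ i ∈ range u, (-degExp (C (C ℓ)) (C (C (v : K)))) ^ i := by
  set z : ℕ → K[X][X] := fun i => C (C (v : K)) * X + C (C ((v : K) / (u : K) * (i : K)))
  have hC (a : K) : algebraMap K K[X][X] a = C (C a) := by simp
  have hsplit : (fun k => C (C ((u : K) ^ k)) * ∑ i ∈ range u, C (C ((-1 : K) ^ i)) *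
      aeval (z i) (E (ℓ / u) r k)) = ∑ i ∈ range u,
        fun k => C (C ((-1 : K) ^ i)) * (C (C ((u : K) ^ k)) * aeval (z i) (E (ℓ / u) r k)) := by
    funext k
    simp only [mul_sum, Finset.sum_apply]
    exact sum_congr rfl fun i _ => by ring
  have hz (i : ℕ) :
      C (C (u : K)) * z i = C (C ((u : K) * v)) * X + (i : K[X][X]) * C (C (v : K)) := by
    have huv : C (C (u : K)) * C (C ((v : K) / u)) = C (C (v : K)) := by
      rw [← C_mul, ← C_mul, mul_div_cancel₀ _ hu]
    have hcast : C (C (i : K)) = (i : K[X][X]) := by simp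
    simp only [z, C_mul, hcast]
    linear_combination (i : K[X][X]) * huv
  rw [hsplit, map_sum, mul_sum, mul_sum]
  refine sum_congr rfl fun i _ => ?_
  have hi := egf_higherOrderEuler_aeval (E (ℓ / u)) (ℓ / u) (hE0 _) (hErec _) (u : K) (z i) r
  simp only [hC, mul_div_cancel₀ _ hu] at hi
  rw [egf_const_mul, mul_left_comm, hi, hz, degExp_add, degExp_natCast_mul, neg_pow]
  simp only [one_pow, mul_one, map_pow, map_neg, map_one, map_mul, map_natCast]
  ring

theorem egf_eulerSymmSum (hE0 : ∀ μ n, E μ 0 n = dff μ n)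
    (hErec : ∀ μ r n, (E μ (r + 1) n).comp (X + 1) + E μ (r + 1) n = 2 * E μ r n)
    {u v m : ℕ} (hu : Odd u) (hv : (v : K) ≠ 0) (hm : 1 ≤ m) :
    (degExp (C (C ℓ)) (C (C (u : K))) + 1) ^ m * (degExp (C (C ℓ)) (C (C (v : K))) + 1) ^ m *
        egf (eulerSymmSum E ℓ u v m) =
      2 ^ m * 2 ^ (m - 1) * (degExp (C (C ℓ)) (C (C ((u : K) * v))) + 1) *
        (degExp (C (C ℓ)) (C (C ((u : K) * v)) * X) *
          degExp (C (C ℓ)) (C (C ((u : K) * v) * X))) := by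
  obtain ⟨M, rfl⟩ := Nat.exists_eq_add_of_le' hm
  have hu0 : (u : K) ≠ 0 := Nat.cast_ne_zero.mpr hu.pos.ne'
  have hC (a : K) : algebraMap K K[X][X] a = C (C a) := by simp
  set A := egf fun k => C (C ((u : K) ^ k)) * ∑ i ∈ range u, C (C ((-1 : K) ^ i)) *
    aeval (C (C (v : K)) * (X : K[X][X]) + C (C ((v : K) / (u : K) * (i : K))))
      (E (ℓ / u) (M + 1) k)
  set B := egf fun j => C (C ((v : K) ^ j)) * aeval (C (C (u : K) * X) : K[X][X]) (E (ℓ / v) M j)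
  have hprod : egf (eulerSymmSum E ℓ u v (M + 1)) = A * B := by
    rw [egf_mul]
    congr 1
    funext n
    rw [Finset.Nat.sum_antidiagonal_eq_sum_range_succ_mk, eulerSymmSum]
    refine sum_congr rfl fun k _ => ?_
    simp only [map_mul, map_pow, map_natCast, Nat.add_sub_cancel]
    ring
  have hA := egf_alternatingEulerSum E ℓ hE0 hErec hu0 v (M + 1)
  have hB := egf_higherOrderEuler_aeval (E (ℓ / v)) (ℓ / v) (hE0 _) (hErec _) v
    (C (C (u : K) * X)) M
  simp only [hC, mul_div_cancel₀ _ hv, ← mul_assoc, ← C_mul, mul_comm (v : K)] at hB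
  have hgeom : (degExp (C (C ℓ)) (C (C (v : K))) + 1) *
      ∑ i ∈ range u, (-degExp (C (C ℓ)) (C (C (v : K)))) ^ i =
      degExp (C (C ℓ)) (C (C ((u : K) * v))) + 1 := by
    rw [hu.add_one_mul_geom_sum_neg, ← degExp_natCast_mul]
    simp [C_mul]
  rw [hprod, Nat.add_sub_cancel, ← hgeom]
  calc _ = ((degExp (C (C ℓ)) (C (C (u : K))) + 1) ^ (M + 1) * A) *
        (degExp (C (C ℓ)) (C (C (v : K))) + 1) *
        ((degExp (C (C ℓ)) (C (C (v : K))) + 1) ^ M * B) := by ring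
    _ = _ := by rw [hA, hB]; ring

theorem eulerSymmSum_comm (hE0 : ∀ μ n, E μ 0 n = dff μ n)
    (hErec : ∀ μ r n, (E μ (r + 1) n).comp (X + 1) + E μ (r + 1) n = 2 * E μ r n)
    {u v m : ℕ} (hu : Odd u) (hv : Odd v) (hm : 1 ≤ m) :
    eulerSymmSum E ℓ u v m = eulerSymmSum E ℓ v u m := by
  have huv := egf_eulerSymmSum E ℓ hE0 hErec hu (Nat.cast_ne_zero.mpr hv.pos.ne') hm
  have hvu := egf_eulerSymmSum E ℓ hE0 hErec hv (Nat.cast_ne_zero.mpr hu.pos.ne') hm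
  rw [mul_comm (v : K), mul_comm ((degExp (C (C ℓ)) (C (C (v : K))) + 1) ^ m)] at hvu
  have hunit := ((isUnit_degExp_add_one (C (C ℓ)) (C (C (u : K)))).pow m).mul
    ((isUnit_degExp_add_one (C (C ℓ)) (C (C (v : K)))).pow m)
  exact egf_injective (hunit.mul_left_cancel (huv.trans hvu.symm))

end SymmetricIdentity

/-- `ℚ(λ)[y][x]` is `(RatFunc ℚ)[X][X]`, with `x` the outer and `y` the inner variable;
`E μ r n` is `𝓔_n^{(r)}(·|μ)`. -/
theorem stmt13_general (E : RatFunc ℚ → ℕ → ℕ → Polynomial (RatFunc ℚ))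
    (hE0 : ∀ μ n, E μ 0 n = dff μ n)
    (hErec : ∀ μ r n,
      (E μ (r + 1) n).comp (Polynomial.X + 1) + E μ (r + 1) n = 2 * E μ r n)
    (w₁ w₂ : ℕ) (hw₁ : Odd w₁) (hw₂ : Odd w₂)
    (n m : ℕ) (hm : 1 ≤ m) :
    ∑ k ∈ Finset.range (n + 1),
        Polynomial.C (Polynomial.C ((n.choose k : RatFunc ℚ) * (w₁ : RatFunc ℚ) ^ k *
            (w₂ : RatFunc ℚ) ^ (n - k))) *
          Polynomial.aeval
            (Polynomial.C (Polynomial.C (w₁ : RatFunc ℚ) * Polynomial.X) :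
              Polynomial (Polynomial (RatFunc ℚ)))
            (E (RatFunc.X / (w₂ : RatFunc ℚ)) (m - 1) (n - k)) *
          ∑ i ∈ Finset.range w₁,
            Polynomial.C (Polynomial.C ((-1 : RatFunc ℚ) ^ i)) *
              Polynomial.aeval
                (Polynomial.C (Polynomial.C (w₂ : RatFunc ℚ)) *
                    (Polynomial.X : Polynomial (Polynomial (RatFunc ℚ))) +
                  Polynomial.C (Polynomial.C
                    ((w₂ : RatFunc ℚ) / (w₁ : RatFunc ℚ) * (i : RatFunc ℚ))))
                (E (RatFunc.X / (w₁ : RatFunc ℚ)) m k) =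
      ∑ k ∈ Finset.range (n + 1),
        Polynomial.C (Polynomial.C ((n.choose k : RatFunc ℚ) * (w₂ : RatFunc ℚ) ^ k *
            (w₁ : RatFunc ℚ) ^ (n - k))) *
          Polynomial.aeval
            (Polynomial.C (Polynomial.C (w₂ : RatFunc ℚ) * Polynomial.X) :
              Polynomial (Polynomial (RatFunc ℚ)))
            (E (RatFunc.X / (w₁ : RatFunc ℚ)) (m - 1) (n - k)) *
          ∑ i ∈ Finset.range w₂,
            Polynomial.C (Polynomial.C ((-1 : RatFunc ℚ) ^ i)) *
              Polynomial.aeval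
                (Polynomial.C (Polynomial.C (w₁ : RatFunc ℚ)) *
                    (Polynomial.X : Polynomial (Polynomial (RatFunc ℚ))) +
                  Polynomial.C (Polynomial.C
                    ((w₁ : RatFunc ℚ) / (w₂ : RatFunc ℚ) * (i : RatFunc ℚ))))
                (E (RatFunc.X / (w₂ : RatFunc ℚ)) m k) :=
  congrFun (eulerSymmSum_comm E RatFunc.X hE0 hErec hw₁ hw₂ hm) n

/-- Theorem 4 of the paper: symmetric identity for higher-order degenerate Euler
polynomials, as an identity in `ℚ(λ)[y][x]` (outer variable `x`, inner variable `y`).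
`E μ r n` is `𝓔_n^{(r)}(·|μ)`, defined by `E μ 0 n = (·|μ)_n` and the recursion. -/
theorem stmt13 (E : RatFunc ℚ → ℕ → ℕ → Polynomial (RatFunc ℚ))
    (hE0 : ∀ μ n, E μ 0 n = dff μ n)
    (hErec : ∀ μ r n,
      (E μ (r + 1) n).comp (Polynomial.X + 1) + E μ (r + 1) n = 2 * E μ r n)
    (w₁ w₂ : ℕ) (hw₁ : Odd w₁) (hw₂ : Odd w₂) (hw₁' : 0 < w₁) (hw₂' : 0 < w₂)
    (n m : ℕ) (hm : 1 ≤ m) :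
    ∑ k ∈ Finset.range (n + 1),
        Polynomial.C (Polynomial.C ((n.choose k : RatFunc ℚ) * (w₁ : RatFunc ℚ) ^ k *
            (w₂ : RatFunc ℚ) ^ (n - k))) *
          Polynomial.aeval
            (Polynomial.C (Polynomial.C (w₁ : RatFunc ℚ) * Polynomial.X) :
              Polynomial (Polynomial (RatFunc ℚ)))
            (E (RatFunc.X / (w₂ : RatFunc ℚ)) (m - 1) (n - k)) *
          ∑ i ∈ Finset.range w₁,
            Polynomial.C (Polynomial.C ((-1 : RatFunc ℚ) ^ i)) *
              Polynomial.aeval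
                (Polynomial.C (Polynomial.C (w₂ : RatFunc ℚ)) *
                    (Polynomial.X : Polynomial (Polynomial (RatFunc ℚ))) +
                  Polynomial.C (Polynomial.C
                    ((w₂ : RatFunc ℚ) / (w₁ : RatFunc ℚ) * (i : RatFunc ℚ))))
                (E (RatFunc.X / (w₁ : RatFunc ℚ)) m k) =
      ∑ k ∈ Finset.range (n + 1),
        Polynomial.C (Polynomial.C ((n.choose k : RatFunc ℚ) * (w₂ : RatFunc ℚ) ^ k *
            (w₁ : RatFunc ℚ) ^ (n - k))) *
          Polynomial.aeval
            (Polynomial.C (Polynomial.C (w₂ : RatFunc ℚ) * Polynomial.X) :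
              Polynomial (Polynomial (RatFunc ℚ)))
            (E (RatFunc.X / (w₁ : RatFunc ℚ)) (m - 1) (n - k)) *
          ∑ i ∈ Finset.range w₂,
            Polynomial.C (Polynomial.C ((-1 : RatFunc ℚ) ^ i)) *
              Polynomial.aeval
                (Polynomial.C (Polynomial.C (w₁ : RatFunc ℚ)) *
                    (Polynomial.X : Polynomial (Polynomial (RatFunc ℚ))) +
                  Polynomial.C (Polynomial.C
                    ((w₁ : RatFunc ℚ) / (w₂ : RatFunc ℚ) * (i : RatFunc ℚ))))
                (E (RatFunc.X / (w₂ : RatFunc ℚ)) m k) :=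
  stmt13_general E hE0 hErec w₁ w₂ hw₁ hw₂ n m hm
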